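/- arXiv:1906.10959 — 2 statements merged into one kernel-verified Lean document; each statement's English description precedes it below -/
import Mathlib

section
/- Let A be a symmetric matrix with nonzero diagonal and sparsity graph G, and let H be the sparsity graph of A². For any vertex v of G, the neighborhood of v in H equals the neighborhood of v in the sparsity graph of X_v², where X_v is the principal submatrix of A indexed by the closed neighborhood of v in H, provided no cancellation occurs (all products of nonzero entries contributing to an entry of A² have the same sign). -/
/-!
With nonnegative entries there is no cancellation, so `(A * A) v w ≠ 0` exactly when some
`k` has `A v k ≠ 0` and `A k w ≠ 0`. Every such `k` already lies in the closed
neighbourhood `S` of `v` in the sparsity graph of `A²`, because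
`(A * A) v k ≥ A v k * A k k > 0` by the nonzero diagonal. So restricting the sum
defining `(A * A) v w` to indices in `S` does not change whether it vanishes.
-/

namespace Matrix

variable {l m n R : Type*} [Fintype m] [Semiring R] [PartialOrder R] [IsOrderedRing R]
  [NoZeroDivisors R]

theorem mul_apply_ne_zero_iff_of_nonneg {A : Matrix l m R} {B : Matrix m n R}
    (hA : ∀ i j, 0 ≤ A i j) (hB : ∀ i j, 0 ≤ B i j) (i : l) (j : n) :
    (A * B) i j ≠ 0 ↔ ∃ k, A i k ≠ 0 ∧ B k j ≠ 0 := by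
  rw [mul_apply, Ne, Finset.sum_eq_zero_iff_of_nonneg fun k _ => mul_nonneg (hA i k) (hB k j)]
  simp only [Finset.mem_univ, true_implies, not_forall, mul_ne_zero_iff]

theorem mul_self_apply_ne_zero_of_apply_ne_zero {A : Matrix m m R} (hA : ∀ i j, 0 ≤ A i j)
    (hdiag : ∀ i, A i i ≠ 0) {i j : m} (hij : A i j ≠ 0) : (A * A) i j ≠ 0 :=
  (mul_apply_ne_zero_iff_of_nonneg hA hA i j).2 ⟨j, hij, hdiag j⟩

end Matrix

open Matrix in
theorem stmt_3_general {n : ℕ} (A : Matrix (Fin n) (Fin n) ℝ)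
    (hdiag : ∀ i, A i i ≠ 0) (hnonneg : ∀ i j, 0 ≤ A i j) (v : Fin n)
    (S : Finset (Fin n)) (hS : ∀ u, u ∈ S ↔ u = v ∨ (A * A) v u ≠ 0)
    (hv : v ∈ S) :
    ∀ w : Fin n, (A * A) v w ≠ 0 ↔
      ∃ hw : w ∈ S,
        (((A.submatrix (Subtype.val : {x // x ∈ S} → Fin n) Subtype.val) *
          (A.submatrix (Subtype.val : {x // x ∈ S} → Fin n) Subtype.val) :
          Matrix {x // x ∈ S} {x // x ∈ S} ℝ))
          ⟨v, hv⟩ ⟨w, hw⟩ ≠ 0 := by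
  intro w
  have hX : ∀ i j : S, 0 ≤ A.submatrix Subtype.val Subtype.val i j := fun i j => hnonneg i j
  simp only [mul_apply_ne_zero_iff_of_nonneg hnonneg hnonneg,
    mul_apply_ne_zero_iff_of_nonneg hX hX, submatrix_apply]
  constructor
  · rintro ⟨k, hvk, hkw⟩
    have hk : k ∈ S := (hS k).2 (.inr (mul_self_apply_ne_zero_of_apply_ne_zero hnonneg hdiag hvk))
    have hw : w ∈ S :=
      (hS w).2 (.inr ((mul_apply_ne_zero_iff_of_nonneg hnonneg hnonneg v w).2 ⟨k, hvk, hkw⟩))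
    exact ⟨hw, ⟨k, hk⟩, hvk, hkw⟩
  · rintro ⟨-, k, hvk, hkw⟩
    exact ⟨k, hvk, hkw⟩

/-- Lemma `neighb`: Let `A` be symmetric with nonzero diagonal and
nonnegative entries (no cancellation), `H` the sparsity graph of `A²`, `S` the closed
neighborhood of `v` in `H`, and `X_v` the principal submatrix of `A` indexed by `S`.
Then the neighborhood of `v` in `H` equals the neighborhood of `v` in the sparsity
graph of `X_v²`. -/
theorem stmt_3 {n : ℕ} (A : Matrix (Fin n) (Fin n) ℝ) (hA : A.IsSymm)
    (hdiag : ∀ i, A i i ≠ 0) (hnonneg : ∀ i j, 0 ≤ A i j) (v : Fin n)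
    (S : Finset (Fin n)) (hS : ∀ u, u ∈ S ↔ u = v ∨ (A * A) v u ≠ 0)
    (hv : v ∈ S) :
    ∀ w : Fin n, (A * A) v w ≠ 0 ↔
      ∃ hw : w ∈ S,
        (((A.submatrix (Subtype.val : {x // x ∈ S} → Fin n) Subtype.val) *
          (A.submatrix (Subtype.val : {x // x ∈ S} → Fin n) Subtype.val) :
          Matrix {x // x ∈ S} {x // x ∈ S} ℝ))
          ⟨v, hv⟩ ⟨w, hw⟩ ≠ 0 :=
  stmt_3_general A hdiag hnonneg v S hS hv
end

section
/- For the star graph K_{1,n-1} on n ≥ 2 vertices, the CH-partition consisting of a single block whose core is the center vertex and whose halo is all n−1 leaves attains the minimum value n³ of the CH-partitioning objective ∑_i (c_i + h_i)³, and any CH-partition whose cores contain two leaves in distinct blocks has objective value at least n³ as well; in particular the single-block partition is optimal. -/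
open Classical

/-- The halo of a core `U` in a graph `G`: vertices outside `U` adjacent to some vertex
of `U`. -/
noncomputable def halo {V : Type*} [Fintype V] (G : SimpleGraph V) (U : Finset V) :
    Finset V :=
  Finset.univ.filter (fun w => w ∉ U ∧ ∃ v ∈ U, G.Adj v w)

/-- The star graph on `Fin n` with center `0`. -/
def starGraph (n : ℕ) [NeZero n] : SimpleGraph (Fin n) where
  Adj v w := v ≠ w ∧ (v = 0 ∨ w = 0)
  symm := by
    constructor
    intro v w h
    exact ⟨h.1.symm, h.2.symm⟩
  loopless := by
    constructor
    intro v h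
    exact h.1 rfl

/-- For the star graph on `n ≥ 2` vertices, the single block with core
the center and halo the `n-1` leaves attains the value `n³` of the objective
`∑ (cᵢ + hᵢ)³`, and any CH-partition (disjoint cores covering the vertices) having
two leaves in the cores of distinct blocks has objective value at least `n³`;
in particular the single-block partition is optimal. -/
theorem stmt_4 (n : ℕ) [NeZero n] (hn : 2 ≤ n) :
    (({(0 : Fin n)} : Finset (Fin n)).card + (halo (starGraph n) {0}).card) ^ 3 = n ^ 3 ∧
    ∀ (q : ℕ) (U : Fin q → Finset (Fin n)),
      (∀ i j, i ≠ j → Disjoint (U i) (U j)) →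
      Finset.univ.biUnion U = Finset.univ →
      (∃ i j l₁ l₂, i ≠ j ∧ l₁ ∈ U i ∧ l₂ ∈ U j ∧ l₁ ≠ 0 ∧ l₂ ≠ 0) →
      n ^ 3 ≤ ∑ i, ((U i).card + (halo (starGraph n) (U i)).card) ^ 3 := by
  constructor
  · have h1 : halo (starGraph n) {0} = Finset.univ.filter (fun w : Fin n => w ≠ 0) := by
      ext w
      simp [halo, starGraph]
      tauto
    have h2 : (Finset.univ.filter (fun w : Fin n => w ≠ 0)).card = n - 1 := by
      rw [Finset.filter_ne' Finset.univ (0 : Fin n)]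
      simp
    rw [h1, h2]
    simp
    omega
  · intro q U hdis hcov _
    have h0 : (0 : Fin n) ∈ Finset.univ.biUnion U := by rw [hcov]; exact Finset.mem_univ _
    obtain ⟨k, -, hk⟩ := Finset.mem_biUnion.mp h0
    have hsub : (Finset.univ : Finset (Fin n)) ⊆ U k ∪ halo (starGraph n) (U k) := by
      intro v _
      by_cases hv : v ∈ U k
      · exact Finset.mem_union_left _ hv
      · refine Finset.mem_union_right _ ?_
        have hvne : v ≠ 0 := by rintro rfl; exact hv hk
        simp only [halo, Finset.mem_filter, Finset.mem_univ, true_and]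
        exact ⟨hv, 0, hk, Ne.symm hvne, Or.inl rfl⟩
    have hcard : n ≤ (U k).card + (halo (starGraph n) (U k)).card := by
      calc n = (Finset.univ : Finset (Fin n)).card := by simp
        _ ≤ (U k ∪ halo (starGraph n) (U k)).card := Finset.card_le_card hsub
        _ ≤ (U k).card + (halo (starGraph n) (U k)).card := Finset.card_union_le _ _
    calc n ^ 3 ≤ ((U k).card + (halo (starGraph n) (U k)).card) ^ 3 :=
          Nat.pow_le_pow_left hcard 3
      _ ≤ ∑ i, ((U i).card + (halo (starGraph n) (U i)).card) ^ 3 :=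
          Finset.single_le_sum (f := fun i => ((U i).card + (halo (starGraph n) (U i)).card) ^ 3)
            (fun i _ => Nat.zero_le _) (Finset.mem_univ k)
end
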